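/- Let X and Y be complex Banach spaces, let E, H ∈ L(X) and F ∈ L(Y) be invertible positive operators, let T ∈ L(X) be such that T^†_{E,H} exists, and suppose T = B C with C ∈ L(X,Y) surjective and B ∈ L(Y,X) injective (so that B^†_{E,F} and C^†_{F,H} exist). Then the following are equivalent: (i) T is weighted EP with weights E and H; (ii) (I_X − C^†_{F,H} C) B = 0 and C (I_X − B B^†_{E,F}) = 0; (iii) B^†_{E,F} (I_X − C^†_{F,H} C) = 0 and (I_X − B B^†_{E,F}) C^†_{F,H} = 0. -/

import Mathlib

/-!
Common definitions: hermitian and positive elements of a complex unital Banach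
algebra, hermitian elements with respect to the equivalent norm induced by an
invertible positive element (weight), and the weighted Moore–Penrose inverse,
both for Banach algebra elements and for bounded linear operators between
Banach spaces.
-/

noncomputable section

/-- An element `a` of a complex unital Banach algebra is hermitian if
`‖exp(i t a)‖ = 1` for all real `t`. -/
def IsHermitianEl {A : Type*} [NormedRing A] [NormedAlgebra ℂ A] (a : A) : Prop :=
  ∀ t : ℝ, ‖NormedSpace.exp ((Complex.I * (t : ℂ)) • a)‖ = 1

/-- An element of a complex unital Banach algebra is positive if it is hermitian
and its spectrum is contained in `[0, ∞)`. -/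
def IsPositiveEl {A : Type*} [NormedRing A] [NormedAlgebra ℂ A] (a : A) : Prop :=
  IsHermitianEl a ∧ spectrum ℂ a ⊆ Complex.ofReal '' Set.Ici (0 : ℝ)

/-- `a` is hermitian in `A^u`, i.e. hermitian for the equivalent norm
`‖x‖_u = ‖u^{1/2} x u^{-1/2}‖`, where `u^{1/2}` is the (unique) invertible
positive square root of the invertible positive weight `u`. -/
def IsHermitianWt {A : Type*} [NormedRing A] [NormedAlgebra ℂ A] (u a : A) : Prop :=
  ∃ s : Aˣ, IsPositiveEl (s : A) ∧ ((s : A)) ^ 2 = u ∧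
    ∀ t : ℝ, ‖(s : A) * NormedSpace.exp ((Complex.I * (t : ℂ)) • a) * ((s⁻¹ : Aˣ) : A)‖ = 1

/-- `b` is the weighted Moore–Penrose inverse of `a` with weights `e` and `f`. -/
def IsWMPI {A : Type*} [NormedRing A] [NormedAlgebra ℂ A] (e f a b : A) : Prop :=
  a * b * a = a ∧ b * a * b = b ∧ IsHermitianWt e (a * b) ∧ IsHermitianWt f (b * a)

/-- `a` is weighted EP with weights `e` and `f`. -/
def IsWEP {A : Type*} [NormedRing A] [NormedAlgebra ℂ A] (e f a : A) : Prop :=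
  ∃ b : A, IsWMPI e f a b ∧ a * b = b * a

/-- `S ∈ L(Y,X)` is the weighted Moore–Penrose inverse of `T ∈ L(X,Y)` with
weights `E ∈ L(Y)` and `F ∈ L(X)`. -/
def IsWMPIop {X Y : Type*} [NormedAddCommGroup X] [NormedSpace ℂ X]
    [NormedAddCommGroup Y] [NormedSpace ℂ Y]
    (E : Y →L[ℂ] Y) (F : X →L[ℂ] X) (T : X →L[ℂ] Y) (S : Y →L[ℂ] X) : Prop :=
  (T.comp S).comp T = T ∧ (S.comp T).comp S = S ∧
    IsHermitianWt E (T.comp S) ∧ IsHermitianWt F (S.comp T)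

/-- `T ∈ L(X)` is weighted EP with weights `E` and `F`. -/
def IsWEPop {X : Type*} [NormedAddCommGroup X] [NormedSpace ℂ X]
    (E F T : X →L[ℂ] X) : Prop :=
  ∃ S : X →L[ℂ] X, IsWMPIop E F T S ∧ T.comp S = S.comp T

/-!
Since `B` is injective and `C` surjective, `B^†B = I` and `C C^† = I`, so `C^† B^†` is the
weighted Moore–Penrose inverse of `T = B C`, with `T T^† = B B^†` and `T^† T = C^† C`. By
uniqueness of the weighted inverse, `T` is weighted EP iff `C^† C = B B^†`, and conditions (ii)
and (iii) are both rewritings of that equation.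

Uniqueness rests on the fact that two idempotents `p`, `q` that are hermitian for the same weight
and have the same range coincide. The weight has a unique positive square root `s` (Rosenblum's
disjoint-spectra argument), and `exp (i π p) = 1 - 2 p`; so `s (1 - 2 (p - q)) s⁻¹` is a product
of two elements of norm one, while its powers `s (1 - 2 n (p - q)) s⁻¹` grow linearly unless
`p = q`.
-/

open NormedSpace Filter Topology

section BanachAlgebra

variable {A : Type*} [NormedRing A] [NormedAlgebra ℂ A]

theorem resolvent_mul_eq_mul_resolvent {a b x : A} (h : a * x = x * b) {z : ℂ}
    (ha : z ∈ resolventSet ℂ a) (hb : z ∈ resolventSet ℂ b) :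
    resolvent a z * x = x * resolvent b z := by
  have hza : (algebraMap ℂ A z - a) * x = x * (algebraMap ℂ A z - b) := by
    rw [sub_mul, mul_sub, h, Algebra.commutes]
  calc resolvent a z * x
      = resolvent a z * x * ((algebraMap ℂ A z - b) * resolvent b z) := by
        rw [resolvent, resolvent, Ring.mul_inverse_cancel _ hb, mul_one]
    _ = resolvent a z * ((algebraMap ℂ A z - a) * x) * resolvent b z := by
        rw [hza]; noncomm_ring
    _ = x * resolvent b z := by
        rw [resolvent, ← mul_assoc, Ring.inverse_mul_cancel _ ha, one_mul]

theorem eq_zero_of_mul_self_eq_zero_of_norm_one_add_le_one {x : A} (hx : x * x = 0)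
    (h : ‖1 + x‖ ≤ 1) : x = 0 := by
  have hpow : ∀ n : ℕ, (1 + x) ^ n = 1 + (n : ℂ) • x := by
    intro n
    induction n with
    | zero => simp
    | succ n ih =>
      rw [pow_succ, ih, add_mul, one_mul, mul_add, mul_one, smul_mul_assoc, hx, smul_zero]
      push_cast
      module
  have hbound : ∀ n : ℕ, (n + 1 : ℝ) * ‖x‖ ≤ 1 + ‖(1 : A)‖ := fun n =>
    calc (n + 1 : ℝ) * ‖x‖ = ‖((n + 1 : ℕ) : ℂ) • x‖ := by
          rw [norm_smul, Complex.norm_natCast, Nat.cast_succ]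
      _ = ‖(1 + x) ^ (n + 1) - 1‖ := by rw [hpow, add_sub_cancel_left]
      _ ≤ ‖(1 + x) ^ (n + 1)‖ + ‖(1 : A)‖ := norm_sub_le _ _
      _ ≤ 1 + ‖(1 : A)‖ := by
          gcongr
          exact (norm_pow_le' _ n.succ_pos).trans (pow_le_one₀ (norm_nonneg _) h)
  by_contra hne
  have hpos : 0 < ‖x‖ := norm_pos_iff.2 hne
  obtain ⟨n, hn⟩ := exists_nat_gt ((1 + ‖(1 : A)‖) / ‖x‖)
  rw [div_lt_iff₀ hpos] at hn
  nlinarith [hbound n]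

variable [CompleteSpace A]

/-- Rosenblum's argument: the two resolvent expressions glue to an entire function vanishing at
infinity, hence zero by Liouville. -/
theorem resolvent_mul_eq_zero_of_disjoint_spectrum {a b x : A}
    (hab : Disjoint (spectrum ℂ a) (spectrum ℂ b)) (h : a * x = x * b) {z : ℂ}
    (hz : z ∈ resolventSet ℂ a) : resolvent a z * x = 0 := by
  classical
  set f : ℂ → A := fun z => if z ∈ spectrum ℂ a then x * resolvent b z else resolvent a z * x
  have hfa : ∀ z ∈ resolventSet ℂ a, f z = resolvent a z * x :=
    fun z hz => if_neg (not_not.2 hz)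
  have hfb : ∀ z ∈ resolventSet ℂ b, f z = x * resolvent b z := by
    intro z hz
    by_cases hza : z ∈ spectrum ℂ a
    · exact if_pos hza
    · replace hza : z ∈ resolventSet ℂ a := not_not.1 hza
      exact (hfa z hza).trans (resolvent_mul_eq_mul_resolvent h hza hz)
  have hf : Differentiable ℂ f := by
    intro z
    by_cases hza : z ∈ spectrum ℂ a
    · have hzb : z ∈ resolventSet ℂ b := not_not.1 (hab.notMem_of_mem_left hza)
      exact ((spectrum.hasDerivAt_resolvent_const_left hzb).differentiableAt.const_mul x
        |>.congr_of_eventuallyEq) (eventually_of_mem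
          ((spectrum.isOpen_resolventSet b).mem_nhds hzb) hfb)
    · replace hza : z ∈ resolventSet ℂ a := not_not.1 hza
      exact ((spectrum.hasDerivAt_resolvent_const_left hza).differentiableAt.mul_const x
        |>.congr_of_eventuallyEq) (eventually_of_mem
          ((spectrum.isOpen_resolventSet a).mem_nhds hza) hfa)
  have hlim : Tendsto f (cocompact ℂ) (𝓝 0) := by
    rw [← Metric.cobounded_eq_cocompact]
    have hbound : ∀ z, ‖f z‖ ≤ ‖resolvent a z‖ * ‖x‖ + ‖x‖ * ‖resolvent b z‖ := by
      intro z
      by_cases hza : z ∈ spectrum ℂ a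
      · simp only [f, if_pos hza]
        exact (norm_mul_le _ _).trans (le_add_of_nonneg_left (by positivity))
      · simp only [f, if_neg hza]
        exact (norm_mul_le _ _).trans (le_add_of_nonneg_right (by positivity))
    refine squeeze_zero_norm hbound ?_
    simpa using ((spectrum.resolvent_tendsto_cobounded a).norm.mul_const ‖x‖).add
      ((spectrum.resolvent_tendsto_cobounded b).norm.const_mul ‖x‖)
  exact (hfa z hz).symm.trans (hf.apply_eq_of_tendsto_cocompact z hlim)

theorem eq_zero_of_mul_eq_mul_of_disjoint_spectrum {a b x : A}
    (hab : Disjoint (spectrum ℂ a) (spectrum ℂ b)) (h : a * x = x * b) : x = 0 := by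
  obtain ⟨z, hz⟩ : ∃ z, z ∈ resolventSet ℂ a :=
    (not_forall.1 fun H => (spectrum.isCompact a).ne_univ (Set.eq_univ_of_forall H)).imp
      fun _ => not_not.1
  rw [← one_mul x, ← Ring.mul_inverse_cancel _ hz, mul_assoc]
  change (algebraMap ℂ A z - a) * (resolvent a z * x) = 0
  rw [resolvent_mul_eq_zero_of_disjoint_spectrum hab h hz, mul_zero]

open Complex in
theorem eq_of_sq_eq_of_spectrum_subset_nonneg {s r : A} (hs : IsUnit s)
    (hs' : spectrum ℂ s ⊆ ofReal '' Set.Ici 0) (hr' : spectrum ℂ r ⊆ ofReal '' Set.Ici 0)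
    (h : s ^ 2 = r ^ 2) : s = r := by
  have hdisj : Disjoint (spectrum ℂ s) (spectrum ℂ (-r)) := by
    refine Set.disjoint_left.2 fun z hzs hzr => spectrum.zero_notMem ℂ hs ?_
    rw [← spectrum.neg_eq, Set.mem_neg] at hzr
    obtain ⟨x, hx, rfl⟩ := hs' hzs
    obtain ⟨y, hy, hyx⟩ := hr' hzr
    have hxy : y = -x := by exact_mod_cast hyx
    have hx0 : x = 0 := le_antisymm (by linarith [Set.mem_Ici.1 hy]) hx
    rwa [hx0, ofReal_zero] at hzs
  have hsq : s * s = r * r := by simpa only [sq] using h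
  refine sub_eq_zero.1 (eq_zero_of_mul_eq_mul_of_disjoint_spectrum hdisj ?_)
  rw [mul_sub, sub_mul, mul_neg, mul_neg, hsq]
  abel

theorem exp_smul_of_isIdempotentElem {p : A} (hp : IsIdempotentElem p) (z : ℂ) :
    exp (z • p) = 1 + (Complex.exp z - 1) • p := by
  have hc : Summable fun n : ℕ => (n.factorial : ℂ)⁻¹ * z ^ n := by
    simpa only [smul_eq_mul] using NormedSpace.expSeries_summable' (𝕂 := ℂ) z
  replace hc : Summable fun n : ℕ => ((n + 1).factorial : ℂ)⁻¹ * z ^ (n + 1) :=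
    (summable_nat_add_iff 1).2 hc
  have hz : Complex.exp z - 1 = ∑' n : ℕ, ((n + 1).factorial : ℂ)⁻¹ * z ^ (n + 1) := by
    rw [Complex.exp_eq_exp_ℂ, exp_eq_tsum ℂ]
    beta_reduce
    rw [(NormedSpace.expSeries_summable' (𝕂 := ℂ) z).tsum_eq_zero_add]
    simp
  rw [exp_eq_tsum ℂ]
  beta_reduce
  rw [(NormedSpace.expSeries_summable' (𝕂 := ℂ) (z • p)).tsum_eq_zero_add]
  simp only [smul_pow, hp.pow_succ_eq, smul_smul, hc.tsum_smul_const, hz]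
  simp

theorem IsHermitianWt.norm_conj_exp_eq_one {u a : A} (ha : IsHermitianWt u a) {s : Aˣ}
    (hs : IsPositiveEl (s : A)) (hsu : (s : A) ^ 2 = u) (t : ℝ) :
    ‖(s : A) * exp ((Complex.I * (t : ℂ)) • a) * ((s⁻¹ : Aˣ) : A)‖ = 1 := by
  obtain ⟨r, hr, hru, hnorm⟩ := ha
  obtain rfl : r = s :=
    Units.ext (eq_of_sq_eq_of_spectrum_subset_nonneg r.isUnit hr.2 hs.2 (hru.trans hsu.symm))
  exact hnorm t

theorem IsHermitianWt.one_sub {u a : A} (ha : IsHermitianWt u a) : IsHermitianWt u (1 - a) := by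
  obtain ⟨s, hs, hsu, hnorm⟩ := ha
  refine ⟨s, hs, hsu, fun t => ?_⟩
  let _ : NormedAlgebra ℚ A := .restrictScalars ℚ ℂ A
  have hsplit : (Complex.I * (t : ℂ)) • (1 - a)
      = algebraMap ℂ A (Complex.I * t) + (Complex.I * ((-t : ℝ) : ℂ)) • a := by
    rw [Algebra.algebraMap_eq_smul_one]
    push_cast
    module
  rw [hsplit, exp_add_of_commute (Algebra.commutes _ _), ← algebraMap_exp_comm,
    ← Algebra.smul_def, mul_smul_comm, smul_mul_assoc, norm_smul, hnorm, ← Complex.exp_eq_exp_ℂ,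
    Complex.norm_exp_I_mul_ofReal, one_mul]

theorem IsHermitianWt.eq_of_mul_eq_right {u p q : A} (hp : IsHermitianWt u p)
    (hq : IsHermitianWt u q) (hp' : IsIdempotentElem p) (hq' : IsIdempotentElem q)
    (hpq : p * q = q) (hqp : q * p = p) : p = q := by
  obtain ⟨s, hs, hsu, hps⟩ := hp
  have hqs := hq.norm_conj_exp_eq_one hs hsu
  have hreflect : ∀ {e : A}, IsIdempotentElem e →
      exp ((Complex.I * ((Real.pi : ℝ) : ℂ)) • e) = 1 - (2 : ℂ) • e := fun he => by
    rw [exp_smul_of_isIdempotentElem he, mul_comm, Complex.exp_pi_mul_I]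
    module
  set δ : A := (-2 : ℂ) • (p - q)
  have hδ : δ * δ = 0 := by
    have : (p - q) * (p - q) = 0 := by
      rw [sub_mul, mul_sub, mul_sub, hp'.eq, hq'.eq, hpq, hqp]
      abel
    rw [smul_mul_smul_comm, this, smul_zero]
  have hprod : (1 - (2 : ℂ) • p) * (1 - (2 : ℂ) • q) = 1 + δ := by
    rw [sub_mul, one_mul, mul_sub, mul_one, smul_mul_smul_comm, hpq]
    module
  have hconj : ∀ e f : A, (s : A) * e * ↑s⁻¹ * ((s : A) * f * ↑s⁻¹) = s * (e * f) * ↑s⁻¹ :=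
    fun e f => by simp only [mul_assoc, Units.inv_mul_cancel_left]
  have hsδ : (s : A) * δ * ↑s⁻¹ = 0 := by
    refine eq_zero_of_mul_self_eq_zero_of_norm_one_add_le_one (by rw [hconj, hδ, mul_zero,
      zero_mul]) ?_
    have h1 : 1 + (s : A) * δ * ↑s⁻¹
        = (s * (1 - (2 : ℂ) • p) * ↑s⁻¹) * (s * (1 - (2 : ℂ) • q) * ↑s⁻¹) := by
      rw [hconj, hprod, mul_add, add_mul, mul_one, Units.mul_inv]
    calc ‖1 + (s : A) * δ * ↑s⁻¹‖
        ≤ ‖(s : A) * (1 - (2 : ℂ) • p) * ↑s⁻¹‖ * ‖(s : A) * (1 - (2 : ℂ) • q) * ↑s⁻¹‖ :=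
          h1 ▸ norm_mul_le _ _
      _ = 1 := by rw [← hreflect hp', ← hreflect hq', hps, hqs, one_mul]
  rw [Units.mul_left_eq_zero, Units.mul_right_eq_zero, smul_eq_zero, sub_eq_zero] at hsδ
  exact hsδ.resolve_left (by norm_num)

theorem IsHermitianWt.eq_of_mul_eq_left {u p q : A} (hp : IsHermitianWt u p)
    (hq : IsHermitianWt u q) (hp' : IsIdempotentElem p) (hq' : IsIdempotentElem q)
    (hpq : p * q = p) (hqp : q * p = q) : p = q := by
  have key : ∀ {e f : A}, e * f = e → (1 - e) * (1 - f) = 1 - f := fun h => by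
    rw [sub_mul, one_mul, mul_sub, mul_one, h]
    abel
  exact sub_right_injective (hp.one_sub.eq_of_mul_eq_right hq.one_sub hp'.one_sub
    hq'.one_sub (key hpq) (key hqp))

end BanachAlgebra

namespace ContinuousLinearMap

variable {X Y Z : Type*} [NormedAddCommGroup X] [NormedSpace ℂ X] [NormedAddCommGroup Y]
  [NormedSpace ℂ Y] [NormedAddCommGroup Z] [NormedSpace ℂ Z]

theorem comp_comp_of_comp_eq_id {f : Y →L[ℂ] X} {g : X →L[ℂ] Y} (h : f.comp g = .id ℂ X)
    (k : Z →L[ℂ] X) : f.comp (g.comp k) = k := by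
  rw [← comp_assoc, h, id_comp]

end ContinuousLinearMap

open ContinuousLinearMap

section Operators

variable {X Y Z : Type*} [NormedAddCommGroup X] [NormedSpace ℂ X] [NormedAddCommGroup Y]
  [NormedSpace ℂ Y] [NormedAddCommGroup Z] [NormedSpace ℂ Z]

namespace IsWMPIop

variable {E : Y →L[ℂ] Y} {F : X →L[ℂ] X} {T : X →L[ℂ] Y} {S : Y →L[ℂ] X}

theorem comp_eq_id_of_injective (h : IsWMPIop E F T S) (hT : Function.Injective T) :
    S.comp T = ContinuousLinearMap.id ℂ X :=
  ext fun x => hT (DFunLike.congr_fun h.1 x)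

theorem comp_eq_id_of_surjective (h : IsWMPIop E F T S) (hT : Function.Surjective T) :
    T.comp S = ContinuousLinearMap.id ℂ Y := by
  ext y
  obtain ⟨x, rfl⟩ := hT y
  exact DFunLike.congr_fun h.1 x

theorem isIdempotentElem_comp (h : IsWMPIop E F T S) : IsIdempotentElem (T.comp S) := by
  rw [IsIdempotentElem, mul_def, ← comp_assoc, h.1]

theorem isIdempotentElem_comp' (h : IsWMPIop E F T S) : IsIdempotentElem (S.comp T) := by
  rw [IsIdempotentElem, mul_def, comp_assoc, ← comp_assoc T, h.1]

theorem unique [CompleteSpace X] [CompleteSpace Y] {S' : Y →L[ℂ] X} (h : IsWMPIop E F T S)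
    (h' : IsWMPIop E F T S') : S = S' := by
  have hTS : T.comp S = T.comp S' :=
    IsHermitianWt.eq_of_mul_eq_right h.2.2.1 h'.2.2.1 h.isIdempotentElem_comp
      h'.isIdempotentElem_comp
      (by rw [mul_def, ← comp_assoc, h.1]) (by rw [mul_def, ← comp_assoc, h'.1])
  have hST : S.comp T = S'.comp T :=
    IsHermitianWt.eq_of_mul_eq_left h.2.2.2 h'.2.2.2 h.isIdempotentElem_comp'
      h'.isIdempotentElem_comp'
      (by rw [mul_def, comp_assoc, ← comp_assoc T, h'.1])
      (by rw [mul_def, comp_assoc, ← comp_assoc T, h.1])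
  calc S = (S.comp T).comp S := h.2.1.symm
    _ = S'.comp (T.comp S) := by rw [hST, comp_assoc]
    _ = S' := by rw [hTS, ← comp_assoc, h'.2.1]

theorem isWEPop_iff [CompleteSpace X] {E F T S : X →L[ℂ] X} (h : IsWMPIop E F T S) :
    IsWEPop E F T ↔ T.comp S = S.comp T := by
  refine ⟨fun ⟨S', h', hcomm⟩ => ?_, fun hcomm => ⟨S, h, hcomm⟩⟩
  rwa [h.unique h']

theorem comp {E : X →L[ℂ] X} {F : Y →L[ℂ] Y} {H : Z →L[ℂ] Z} {B : Y →L[ℂ] X} {SB : X →L[ℂ] Y}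
    {C : Z →L[ℂ] Y} {SC : Y →L[ℂ] Z} (hSB : IsWMPIop E F B SB) (hSC : IsWMPIop F H C SC)
    (hB : SB.comp B = .id ℂ Y) (hC : C.comp SC = .id ℂ Y) :
    IsWMPIop E H (B.comp C) (SC.comp SB) := by
  have hTS : (B.comp C).comp (SC.comp SB) = B.comp SB := by
    rw [comp_assoc, comp_comp_of_comp_eq_id hC]
  have hST : (SC.comp SB).comp (B.comp C) = SC.comp C := by
    rw [comp_assoc, comp_comp_of_comp_eq_id hB]
  refine ⟨?_, ?_, hTS ▸ hSB.2.2.1, hST ▸ hSC.2.2.2⟩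
  · rw [hTS, ← comp_assoc, hSB.1]
  · rw [hST, ← comp_assoc, hSC.2.1]

end IsWMPIop

variable {B : Y →L[ℂ] X} {C : X →L[ℂ] Y} {SB : X →L[ℂ] Y} {SC : Y →L[ℂ] X}

theorem isWEPop_comp_iff [CompleteSpace X] {E H : X →L[ℂ] X} {F : Y →L[ℂ] Y}
    (hSB : IsWMPIop E F B SB) (hSC : IsWMPIop F H C SC) (hB : SB.comp B = .id ℂ Y)
    (hC : C.comp SC = .id ℂ Y) : IsWEPop E H (B.comp C) ↔ SC.comp C = B.comp SB := by
  rw [(hSB.comp hSC hB hC).isWEPop_iff, comp_assoc, comp_comp_of_comp_eq_id hC, comp_assoc,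
    comp_comp_of_comp_eq_id hB, eq_comm]

theorem comp_eq_comp_iff_factors_annihilated (hB : SB.comp B = .id ℂ Y)
    (hC : C.comp SC = .id ℂ Y) : SC.comp C = B.comp SB ↔
      (ContinuousLinearMap.id ℂ X - SC.comp C).comp B = 0 ∧
        C.comp (ContinuousLinearMap.id ℂ X - B.comp SB) = 0 := by
  simp only [sub_comp, comp_sub, id_comp, comp_id, sub_eq_zero]
  constructor
  · intro h
    constructor
    · rw [h, comp_assoc, hB, comp_id]
    · rw [← h, ← comp_assoc, hC, id_comp]
  · rintro ⟨hPB, hCQ⟩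
    calc SC.comp C = SC.comp (C.comp (B.comp SB)) := by rw [← hCQ]
      _ = ((SC.comp C).comp B).comp SB := by simp only [comp_assoc]
      _ = B.comp SB := by rw [← hPB]

theorem comp_eq_comp_iff_inverses_annihilated (hB : SB.comp B = .id ℂ Y)
    (hC : C.comp SC = .id ℂ Y) : SC.comp C = B.comp SB ↔
      SB.comp (ContinuousLinearMap.id ℂ X - SC.comp C) = 0 ∧
        (ContinuousLinearMap.id ℂ X - B.comp SB).comp SC = 0 := by
  simp only [sub_comp, comp_sub, id_comp, comp_id, sub_eq_zero]
  constructor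
  · intro h
    constructor
    · rw [h, ← comp_assoc, hB, id_comp]
    · rw [← h, comp_assoc, hC, comp_id]
  · rintro ⟨hSBP, hQSC⟩
    calc SC.comp C = ((B.comp SB).comp SC).comp C := by rw [← hQSC]
      _ = B.comp (SB.comp (SC.comp C)) := by simp only [comp_assoc]
      _ = B.comp SB := by rw [← hSBP]

end Operators

theorem factorization_BC_weighted_EP_iff_annihilation_general
    {X Y : Type*} [NormedAddCommGroup X] [NormedSpace ℂ X] [CompleteSpace X]
    [NormedAddCommGroup Y] [NormedSpace ℂ Y]
    (E H : X →L[ℂ] X) (F : Y →L[ℂ] Y)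
    (T : X →L[ℂ] X) (C : X →L[ℂ] Y) (B : Y →L[ℂ] X)
    (hC : Function.Surjective C) (hB : Function.Injective B)
    (hBC : T = B.comp C)
    (SB : X →L[ℂ] Y) (hSB : IsWMPIop E F B SB)
    (SC : Y →L[ℂ] X) (hSC : IsWMPIop F H C SC) :
    (IsWEPop E H T ↔
      ((ContinuousLinearMap.id ℂ X - SC.comp C).comp B = 0 ∧
        C.comp (ContinuousLinearMap.id ℂ X - B.comp SB) = 0)) ∧
    (IsWEPop E H T ↔
      (SB.comp (ContinuousLinearMap.id ℂ X - SC.comp C) = 0 ∧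
        (ContinuousLinearMap.id ℂ X - B.comp SB).comp SC = 0)) := by
  have hB' := hSB.comp_eq_id_of_injective hB
  have hC' := hSC.comp_eq_id_of_surjective hC
  rw [hBC, isWEPop_comp_iff hSB hSC hB' hC']
  exact ⟨comp_eq_comp_iff_factors_annihilated hB' hC',
    comp_eq_comp_iff_inverses_annihilated hB' hC'⟩

/-- For `T = B C` as above, `T` is weighted EP with weights `E` and `H` iff
`(I_X − C^†_{F,H} C) B = 0` and `C (I_X − B B^†_{E,F}) = 0`, iff
`B^†_{E,F} (I_X − C^†_{F,H} C) = 0` and `(I_X − B B^†_{E,F}) C^†_{F,H} = 0`. -/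
theorem factorization_BC_weighted_EP_iff_annihilation
    {X Y : Type*} [NormedAddCommGroup X] [NormedSpace ℂ X] [CompleteSpace X]
    [NormedAddCommGroup Y] [NormedSpace ℂ Y] [CompleteSpace Y]
    (E H : X →L[ℂ] X) (F : Y →L[ℂ] Y)
    (hE : IsPositiveEl E ∧ IsUnit E) (hH : IsPositiveEl H ∧ IsUnit H)
    (hF : IsPositiveEl F ∧ IsUnit F)
    (T : X →L[ℂ] X) (C : X →L[ℂ] Y) (B : Y →L[ℂ] X)
    (hC : Function.Surjective C) (hB : Function.Injective B)
    (hBC : T = B.comp C)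
    (ST : X →L[ℂ] X) (hST : IsWMPIop E H T ST)
    (SB : X →L[ℂ] Y) (hSB : IsWMPIop E F B SB)
    (SC : Y →L[ℂ] X) (hSC : IsWMPIop F H C SC) :
    (IsWEPop E H T ↔
      ((ContinuousLinearMap.id ℂ X - SC.comp C).comp B = 0 ∧
        C.comp (ContinuousLinearMap.id ℂ X - B.comp SB) = 0)) ∧
    (IsWEPop E H T ↔
      (SB.comp (ContinuousLinearMap.id ℂ X - SC.comp C) = 0 ∧
        (ContinuousLinearMap.id ℂ X - B.comp SB).comp SC = 0)) :=
  factorization_BC_weighted_EP_iff_annihilation_general E H F T C B hC hB hBC SB hSB SC hSC
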